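/- Let ω ∈ ℝ^ν and let α ∈ C²(𝕋^ν, ℝ) satisfy 1 + ω·∂_φ α(φ) > 0 for all φ ∈ 𝕋^ν, and assume the map Ψ : 𝕋^ν → 𝕋^ν, Ψ(φ) = φ + ω α(φ) (mod 2πℤ^ν), is a bijection (hence a C¹ diffeomorphism with inverse of the form θ ↦ θ + ω ᾰ(θ)). Define a₁(θ) := ((ω·∂_φ)² α)(Ψ^{-1}(θ)) / (1 + ω·∂_φ α(Ψ^{-1}(θ)))². Then ∫_{𝕋^ν} a₁(θ) dθ = 0. -/

import Mathlib

open MeasureTheory Filter Set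
open scoped BigOperators ENNReal NNReal

noncomputable section

/-- `2π`-periodicity in each coordinate: a function on `ℝ^n` representing a function on the
torus `𝕋^n = (ℝ/2πℤ)^n`. -/
def TorusPeriodic {n : ℕ} (u : (Fin n → ℝ) → ℝ) : Prop :=
  ∀ (x : Fin n → ℝ) (m : Fin n → ℤ), u (fun i => x i + 2 * Real.pi * (m i)) = u x

/-- A fundamental domain of the torus `𝕋^n`. -/
def torusBox (n : ℕ) : Set (Fin n → ℝ) := Set.univ.pi fun _ => Set.Ioc 0 (2 * Real.pi)

/-- The `k`-th Fourier coefficient of a (real-valued) function on the torus `𝕋^n`. -/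
def fourierCoef {n : ℕ} (u : (Fin n → ℝ) → ℝ) (k : Fin n → ℤ) : ℂ :=
  ((((2 * Real.pi) ^ n)⁻¹ : ℝ) : ℂ) *
    ∫ x in torusBox n, (u x : ℂ) * Complex.exp (-Complex.I * ∑ i, (k i : ℂ) * (x i : ℂ))

/-- `⟨k⟩ = max(1, |k|)`. -/
def jap {n : ℕ} (k : Fin n → ℤ) : ℝ := max 1 (Real.sqrt (∑ i, ((k i : ℝ)) ^ 2))

/-- Membership in the Sobolev space `H^s(𝕋^n)` (summability defining the `H^s` norm). -/
def MemSob {n : ℕ} (u : (Fin n → ℝ) → ℝ) (s : ℝ) : Prop :=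
  Summable fun k : Fin n → ℤ => jap k ^ (2 * s) * ‖fourierCoef u k‖ ^ 2

/-- The Sobolev norm `‖u‖_s`. -/
def sobNorm {n : ℕ} (u : (Fin n → ℝ) → ℝ) (s : ℝ) : ℝ :=
  Real.sqrt (∑' k : Fin n → ℤ, jap k ^ (2 * s) * ‖fourierCoef u k‖ ^ 2)

/-- Directional derivative of `u` at `z` in direction `v`. -/
def derivAlong {m : ℕ} (u : (Fin m → ℝ) → ℝ) (v : Fin m → ℝ) (z : Fin m → ℝ) : ℝ :=
  fderiv ℝ u z v

/-- Second directional derivative of `u` at `z` in directions `v`, `w`. -/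
def deriv2Along {m : ℕ} (u : (Fin m → ℝ) → ℝ) (v w : Fin m → ℝ) (z : Fin m → ℝ) : ℝ :=
  fderiv ℝ (fun y => fderiv ℝ u y v) z w

/-- `s₀ := ⌊n/2⌋ + 1`. -/
def s0 (n : ℕ) : ℕ := n / 2 + 1

/-- The `γ₀`-Diophantine condition `|ω̄·ℓ| ≥ γ₀/|ℓ|^ν`. -/
def Diophantine {ν : ℕ} (γ₀ : ℝ) (ωb : Fin ν → ℝ) : Prop :=
  ∀ ℓ : Fin ν → ℤ, ℓ ≠ 0 →
    γ₀ / (Real.sqrt (∑ i, ((ℓ i : ℝ)) ^ 2)) ^ ν ≤ |∑ i, ωb i * (ℓ i : ℝ)|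

/-!
The derivative of `Ψ(φ) = φ + α(φ) ω` is `v ↦ v + (∂α(φ) v) ω`, which maps `ω` to
`(1 + ω·∂α(φ)) ω`; hence `DΨ⁻¹(θ) ω = ω / (1 + ω·∂α(Ψ⁻¹θ))`, and the chain rule gives
`a₁ = ω·∂_θ log (1 + ω·∂α ∘ Ψ⁻¹)`. Since `Ψ` commutes with the translations by `2πℤ^ν`, so does
`Ψ⁻¹`, and the function under the logarithm is periodic. The integral over a period cell of a
directional derivative of a periodic `C¹` function vanishes: `t ↦ ∫ F(θ + t ω) dθ` is constant,
and its derivative at `0` is `∫ ω·∂F`.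
-/

open Function

section GlobalInverse

variable {𝕜 E F : Type*} [RCLike 𝕜] [NormedAddCommGroup E] [NormedSpace 𝕜 E] [CompleteSpace E]
  [NormedAddCommGroup F] [NormedSpace 𝕜 F] {n : WithTop ℕ∞} {f : E → F} {f' : E → E ≃L[𝕜] F}

theorem contDiff_invFun_of_bijective (hf : ContDiff 𝕜 n f) (hn : n ≠ 0)
    (hf' : ∀ x, HasFDerivAt f (f' x : E →L[𝕜] F) x) (hbij : Bijective f) :
    ContDiff 𝕜 n (invFun f) := by
  have hopen : IsOpenMap f := isOpenMap_of_hasStrictFDerivAt_equiv fun x =>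
    hf.contDiffAt.hasStrictFDerivAt' (hf' x) hn
  let e : E ≃ₜ F := (Equiv.ofBijective f hbij).toHomeomorphOfContinuousOpen hf.continuous hopen
  have he : invFun f = e.symm := funext fun y => hbij.1 <| by
    rw [rightInverse_invFun hbij.2 y]
    exact (e.apply_symm_apply y).symm
  rw [he]
  exact e.contDiff_symm hf' hf

theorem hasFDerivAt_invFun_of_bijective (hf : ContDiff 𝕜 n f) (hn : n ≠ 0)
    (hf' : ∀ x, HasFDerivAt f (f' x : E →L[𝕜] F) x) (hbij : Bijective f) (y : F) :
    HasFDerivAt (invFun f) ((f' (invFun f y)).symm : F →L[𝕜] E) y :=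
  (hf' _).of_local_left_inverse
    (contDiff_invFun_of_bijective hf hn hf' hbij).continuous.continuousAt
    (Eventually.of_forall (rightInverse_invFun hbij.2))

end GlobalInverse

section AddSmulConst

variable {E : Type*} [NormedAddCommGroup E] [NormedSpace ℝ E] [FiniteDimensional ℝ E]

def dilatransvectionL (ℓ : E →L[ℝ] ℝ) (ω : E) (h : 1 + ℓ ω ≠ 0) : E ≃L[ℝ] E :=
  (LinearEquiv.dilatransvection (f := (ℓ : E →ₗ[ℝ] ℝ)) (v := ω) h.isUnit).toContinuousLinearEquiv

theorem dilatransvectionL_apply (ℓ : E →L[ℝ] ℝ) (ω : E) (h : 1 + ℓ ω ≠ 0) (x : E) :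
    dilatransvectionL ℓ ω h x = x + ℓ x • ω :=
  LinearEquiv.dilatransvection.apply

theorem dilatransvectionL_symm_apply_self (ℓ : E →L[ℝ] ℝ) (ω : E) (h : 1 + ℓ ω ≠ 0) :
    (dilatransvectionL ℓ ω h).symm ω = (1 + ℓ ω)⁻¹ • ω := by
  rw [ContinuousLinearEquiv.symm_apply_eq, dilatransvectionL_apply, map_smul, smul_eq_mul]
  match_scalars
  field_simp

variable {α : E → ℝ} {ω : E} {n : WithTop ℕ∞}

theorem hasFDerivAt_add_smul_const {φ : E} (hα : DifferentiableAt ℝ α φ)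
    (h : 1 + fderiv ℝ α φ ω ≠ 0) :
    HasFDerivAt (fun φ => φ + α φ • ω) (dilatransvectionL (fderiv ℝ α φ) ω h : E →L[ℝ] E) φ :=
  ((hasFDerivAt_id φ).add (hα.hasFDerivAt.smul_const ω)).congr_fderiv <| by
    ext x
    simp [dilatransvectionL_apply]

variable (hne : ∀ φ, 1 + fderiv ℝ α φ ω ≠ 0) (hbij : Bijective fun φ => φ + α φ • ω)
include hne hbij

theorem contDiff_invFun_add_smul_const (hα : ContDiff ℝ n α) (hn : n ≠ 0) :
    ContDiff ℝ n (invFun fun φ => φ + α φ • ω) :=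
  contDiff_invFun_of_bijective (f := fun φ => φ + α φ • ω)
    (contDiff_id.add (hα.smul contDiff_const)) hn
    (fun φ => hasFDerivAt_add_smul_const (hα.differentiable hn φ) (hne φ)) hbij

theorem fderiv_invFun_add_smul_const_apply_self (hα : ContDiff ℝ 1 α) (θ : E) :
    fderiv ℝ (invFun fun φ => φ + α φ • ω) θ ω =
      (1 + fderiv ℝ α (invFun (fun φ => φ + α φ • ω) θ) ω)⁻¹ • ω := by
  rw [(hasFDerivAt_invFun_of_bijective (f := fun φ => φ + α φ • ω)
    (contDiff_id.add (hα.smul contDiff_const)) one_ne_zero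
    (fun φ => hasFDerivAt_add_smul_const (hα.differentiable one_ne_zero φ) (hne φ)) hbij θ).fderiv]
  exact dilatransvectionL_symm_apply_self _ _ _

theorem fderiv_log_one_add_fderiv_comp_invFun_apply_self (hα : ContDiff ℝ 2 α) (θ : E) :
    fderiv ℝ (fun θ => Real.log (1 + fderiv ℝ α (invFun (fun φ => φ + α φ • ω) θ) ω)) θ ω =
      fderiv ℝ (fun φ => fderiv ℝ α φ ω) (invFun (fun φ => φ + α φ • ω) θ) ω /
        (1 + fderiv ℝ α (invFun (fun φ => φ + α φ • ω) θ) ω) ^ 2 := by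
  set Ψinv := invFun fun φ => φ + α φ • ω
  set g : E → ℝ := fun φ => fderiv ℝ α φ ω
  have hα1 : ContDiff ℝ 1 α := hα.of_le one_le_two
  have hg : ContDiff ℝ 1 g := (hα.fderiv_right one_add_one_eq_two.le).clm_apply contDiff_const
  have hΨinv : DifferentiableAt ℝ Ψinv θ :=
    (contDiff_invFun_add_smul_const hne hbij hα1 one_ne_zero).differentiable one_ne_zero θ
  have hgΨinv : HasFDerivAt (fun θ => g (Ψinv θ))
      ((fderiv ℝ g (Ψinv θ)).comp (fderiv ℝ Ψinv θ)) θ :=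
    (hg.differentiable one_ne_zero _).hasFDerivAt.comp θ hΨinv.hasFDerivAt
  rw [((hgΨinv.const_add 1).log (hne _)).fderiv]
  have hΨinvω : fderiv ℝ Ψinv θ ω = (1 + g (Ψinv θ))⁻¹ • ω :=
    fderiv_invFun_add_smul_const_apply_self hne hbij hα1 θ
  simp only [smul_apply, ContinuousLinearMap.comp_apply, smul_eq_mul, hΨinvω, map_smul]
  field_simp
  rfl

end AddSmulConst

section Torus

variable {ν : ℕ}

def torusLatticeHom (ν : ℕ) : (Fin ν → ℤ) →+ (Fin ν → ℝ) :=
  AddMonoidHom.mk' (fun m i => 2 * Real.pi * m i) fun a b => by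
    funext i
    simp only [Pi.add_apply, Int.cast_add]
    ring

def torusLattice (ν : ℕ) : AddSubgroup (Fin ν → ℝ) := (torusLatticeHom ν).range

instance : Countable (torusLattice ν) := (Set.countable_range (torusLatticeHom ν)).to_subtype

theorem torusPeriodic_iff {u : (Fin ν → ℝ) → ℝ} :
    TorusPeriodic u ↔ ∀ x m, u (x + torusLatticeHom ν m) = u x :=
  Iff.rfl

theorem TorusPeriodic.add_mem {u : (Fin ν → ℝ) → ℝ} (hu : TorusPeriodic u) {g : Fin ν → ℝ}
    (hg : g ∈ torusLattice ν) (x : Fin ν → ℝ) : u (x + g) = u x := by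
  obtain ⟨m, rfl⟩ := hg
  exact hu x m

theorem TorusPeriodic.comp_add_torusLatticeHom {u : (Fin ν → ℝ) → ℝ} (hu : TorusPeriodic u)
    (m : Fin ν → ℤ) : (fun x => u (x + torusLatticeHom ν m)) = u :=
  funext fun x => hu x m

theorem TorusPeriodic.comp_left {u : (Fin ν → ℝ) → ℝ} (hu : TorusPeriodic u) (f : ℝ → ℝ) :
    TorusPeriodic (fun x => f (u x)) :=
  fun x m => congrArg f (hu x m)

theorem TorusPeriodic.comp_semiconj {u : (Fin ν → ℝ) → ℝ} (hu : TorusPeriodic u)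
    {f : (Fin ν → ℝ) → Fin ν → ℝ}
    (hf : ∀ m, Semiconj f (· + torusLatticeHom ν m) (· + torusLatticeHom ν m)) :
    TorusPeriodic (u ∘ f) :=
  fun x m => (congrArg u (hf m x)).trans (hu (f x) m)

theorem TorusPeriodic.fderiv_apply {u : (Fin ν → ℝ) → ℝ} (hu : TorusPeriodic u)
    (w : Fin ν → ℝ) : TorusPeriodic fun x => fderiv ℝ u x w := fun x m => by
  change fderiv ℝ u (x + torusLatticeHom ν m) w = _
  rw [← fderiv_comp_add_right, hu.comp_add_torusLatticeHom]

theorem TorusPeriodic.semiconj_add_smul_const {α : (Fin ν → ℝ) → ℝ} (hα : TorusPeriodic α)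
    (ω : Fin ν → ℝ) (m : Fin ν → ℤ) :
    Semiconj (fun φ => φ + α φ • ω) (· + torusLatticeHom ν m) (· + torusLatticeHom ν m) :=
  fun φ => by
    simp only [torusPeriodic_iff.mp hα φ m]
    abel

theorem isAddFundamentalDomain_torusBox :
    IsAddFundamentalDomain (torusLattice ν) (torusBox ν) := by
  refine .mk' (MeasurableSet.univ_pi fun _ => measurableSet_Ioc).nullMeasurableSet fun x => ?_
  choose m hm hm_unique using fun i => existsUnique_add_zsmul_mem_Ioc Real.two_pi_pos (x i) 0
  refine ⟨⟨torusLatticeHom ν m, m, rfl⟩, fun i _ => ?_, ?_⟩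
  · simpa [torusLatticeHom, zsmul_eq_mul, mul_comm, add_comm] using hm i
  · rintro ⟨-, m', rfl⟩ hm'
    obtain rfl : m' = m := funext fun i => hm_unique i (m' i) <| by
      simpa [torusLatticeHom, zsmul_eq_mul, mul_comm, add_comm] using hm' i (mem_univ i)
    rfl

theorem TorusPeriodic.setIntegral_torusBox_comp_add_right {u : (Fin ν → ℝ) → ℝ}
    (hu : TorusPeriodic u) (v : Fin ν → ℝ) :
    ∫ x in torusBox ν, u (x + v) = ∫ x in torusBox ν, u x := by
  have hbox := isAddFundamentalDomain_torusBox (ν := ν)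
  have hshift : IsAddFundamentalDomain (torusLattice ν) ((· + v) ⁻¹' torusBox ν) :=
    hbox.preimage_of_equiv (measurePreserving_add_right volume v).quasiMeasurePreserving
      bijective_id fun g x => add_assoc (g : Fin ν → ℝ) x v
  calc ∫ x in torusBox ν, u (x + v) = ∫ x in (· + v) ⁻¹' torusBox ν, u (x + v) :=
        hbox.setIntegral_eq hshift fun g x => by
          rw [AddSubgroup.vadd_def, vadd_eq_add, add_assoc, add_comm, hu.add_mem g.2]
    _ = ∫ x in torusBox ν, u x :=
        (measurePreserving_add_right volume v).setIntegral_preimage_emb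
          (measurableEmbedding_addRight v) u _

theorem torusBox_subset_Icc : torusBox ν ⊆ Icc 0 fun _ => 2 * Real.pi :=
  fun _ hx => ⟨fun i => (hx i (mem_univ i)).1.le, fun i => (hx i (mem_univ i)).2⟩

theorem norm_le_of_mem_torusBox {x : Fin ν → ℝ} (hx : x ∈ torusBox ν) : ‖x‖ ≤ 2 * Real.pi :=
  (pi_norm_le_iff_of_nonneg Real.two_pi_pos.le).2 fun i => by
    rw [Real.norm_eq_abs, abs_of_pos (hx i (mem_univ i)).1]
    exact (hx i (mem_univ i)).2

theorem Continuous.integrableOn_torusBox {u : (Fin ν → ℝ) → ℝ} (hu : Continuous u) :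
    IntegrableOn u (torusBox ν) :=
  (hu.integrableOn_Icc).mono_set torusBox_subset_Icc

theorem TorusPeriodic.integral_fderiv_apply_eq_zero {F : (Fin ν → ℝ) → ℝ} (hper : TorusPeriodic F)
    (hF : ContDiff ℝ 1 F) (w : Fin ν → ℝ) :
    ∫ x in torusBox ν, fderiv ℝ F x w = 0 := by
  obtain ⟨M, hM⟩ := IsCompact.exists_bound_of_continuousOn
    (isCompact_closedBall (0 : Fin ν → ℝ) (2 * Real.pi + ‖w‖))
    (hF.continuous_fderiv one_ne_zero).continuousOn
  have hsegment : ∀ x ∈ torusBox ν, ∀ t ∈ Metric.ball (0 : ℝ) 1,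
      x + t • w ∈ Metric.closedBall 0 (2 * Real.pi + ‖w‖) := by
    intro x hx t ht
    rw [mem_ball_zero_iff, Real.norm_eq_abs] at ht
    rw [mem_closedBall_zero_iff]
    calc ‖x + t • w‖ ≤ ‖x‖ + |t| * ‖w‖ := by
          rw [← Real.norm_eq_abs, ← norm_smul]
          exact norm_add_le _ _
      _ ≤ 2 * Real.pi + 1 * ‖w‖ :=
        add_le_add (norm_le_of_mem_torusBox hx) (mul_le_mul_of_nonneg_right ht.le (norm_nonneg _))
      _ = 2 * Real.pi + ‖w‖ := by rw [one_mul]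
  have hfin : volume (torusBox ν) ≠ ⊤ :=
    ((measure_mono torusBox_subset_Icc).trans_lt measure_Icc_lt_top).ne
  have hderiv := (hasDerivAt_integral_of_dominated_loc_of_deriv_le
    (μ := volume.restrict (torusBox ν)) (F := fun t x => F (x + t • w))
    (F' := fun t x => fderiv ℝ F (x + t • w) w) (x₀ := 0) (bound := fun _ => M * ‖w‖)
    (Metric.ball_mem_nhds 0 one_pos)
    (Eventually.of_forall fun t =>
      (hF.continuous.comp (continuous_add_const _)).aestronglyMeasurable)
    (hF.continuous.comp (continuous_add_const _)).integrableOn_torusBox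
    (((hF.continuous_fderiv one_ne_zero).comp (continuous_add_const _)).clm_apply
      continuous_const).aestronglyMeasurable
    (ae_restrict_of_forall_mem (MeasurableSet.univ_pi fun _ => measurableSet_Ioc) fun x hx t ht =>
      (ContinuousLinearMap.le_opNorm _ _).trans
        (mul_le_mul_of_nonneg_right (hM _ (hsegment x hx t ht)) (norm_nonneg _)))
    (integrableOn_const hfin)
    (ae_of_all _ fun x t _ => by
      simpa [Function.comp_def] using
        (hF.differentiable one_ne_zero _).hasFDerivAt.comp_hasDerivAt t
          (((hasDerivAt_id t).smul_const w).const_add x))).2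
  simp only [zero_smul, add_zero, funext fun t => hper.setIntegral_torusBox_comp_add_right (t • w)]
    at hderiv
  exact hderiv.unique (hasDerivAt_const 0 _)

end Torus

theorem a1_zero_average_general
    (ν : ℕ) (ω : Fin ν → ℝ)
    (α : (Fin ν → ℝ) → ℝ) (hα : ContDiff ℝ 2 α) (hper : TorusPeriodic α)
    (hpos : ∀ φ, 0 < 1 + derivAlong α ω φ)
    (hbij : Function.Bijective (fun φ : Fin ν → ℝ => fun i => φ i + ω i * α φ)) :
    (∫ θ in torusBox ν,
        deriv2Along α ω ω
            (Function.invFun (fun φ : Fin ν → ℝ => fun i => φ i + ω i * α φ) θ)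
          / (1 + derivAlong α ω
              (Function.invFun (fun φ : Fin ν → ℝ => fun i => φ i + ω i * α φ) θ)) ^ 2)
      = 0 := by
  have hΨ : (fun φ : Fin ν → ℝ => fun i => φ i + ω i * α φ) = fun φ => φ + α φ • ω := by
    funext φ i
    simp [mul_comm]
  rw [hΨ] at hbij ⊢
  have hne : ∀ φ, 1 + fderiv ℝ α φ ω ≠ 0 := fun φ => (hpos φ).ne'
  have hΨinv_semiconj (m : Fin ν → ℤ) : Semiconj (invFun fun φ => φ + α φ • ω)
      (· + torusLatticeHom ν m) (· + torusLatticeHom ν m) :=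
    (hper.semiconj_add_smul_const ω m).inverse_left (leftInverse_invFun hbij.1)
      (rightInverse_invFun hbij.2)
  have hFper : TorusPeriodic fun θ =>
      Real.log (1 + fderiv ℝ α (invFun (fun φ => φ + α φ • ω) θ) ω) :=
    ((hper.fderiv_apply ω).comp_semiconj hΨinv_semiconj).comp_left fun t => Real.log (1 + t)
  have hF : ContDiff ℝ 1 fun θ =>
      Real.log (1 + fderiv ℝ α (invFun (fun φ => φ + α φ • ω) θ) ω) :=
    (contDiff_const.add (((hα.fderiv_right one_add_one_eq_two.le).clm_apply contDiff_const).comp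
      (contDiff_invFun_add_smul_const hne hbij (hα.of_le one_le_two) one_ne_zero))).log
      fun θ => hne _
  simp only [derivAlong, deriv2Along,
    ← fderiv_log_one_add_fderiv_comp_invFun_apply_self hne hbij hα]
  exact hFper.integral_fderiv_apply_eq_zero hF ω

/-- The coefficient `a₁(θ) = (ω·∂_φ)²α(Ψ⁻¹θ) / (1+ω·∂_φ α(Ψ⁻¹θ))²` of the first-order term
has zero average on `𝕋^ν`, where `Ψ(φ) = φ + ωα(φ)`. -/
theorem a1_zero_average
    (ν : ℕ) (hν : 1 ≤ ν) (ω : Fin ν → ℝ)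
    (α : (Fin ν → ℝ) → ℝ) (hα : ContDiff ℝ 2 α) (hper : TorusPeriodic α)
    (hpos : ∀ φ, 0 < 1 + derivAlong α ω φ)
    (hbij : Function.Bijective (fun φ : Fin ν → ℝ => fun i => φ i + ω i * α φ)) :
    (∫ θ in torusBox ν,
        deriv2Along α ω ω
            (Function.invFun (fun φ : Fin ν → ℝ => fun i => φ i + ω i * α φ) θ)
          / (1 + derivAlong α ω
              (Function.invFun (fun φ : Fin ν → ℝ => fun i => φ i + ω i * α φ) θ)) ^ 2)
      = 0 :=
  a1_zero_average_general ν ω α hα hper hpos hbij
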